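/- arXiv:1501.07043 — 5 statements merged into one kernel-verified Lean document; each statement's English description precedes it below -/
import Mathlib

section
/- For the focal submanifolds of isoparametric hypersurfaces with g = 3 and multiplicity m ∈ {1,2,4,8}, the normal scalar curvature equals ρ^⊥ = (2/3)·m·√(2(m+1)). In particular it is positive, so these submanifolds are not normally flat. (Algebraic form: if A₁,…,A_{m+1} are symmetric 2m×2m matrices with Aα² = I/3 and AαAβ + AβAα = 0 for α≠β, then Σ_{α,β} ‖[Aα,Aβ]‖² = 8m²(m+1)/9.) -/
theorem stmt_4 {m : ℕ} (hm : m ∈ ({1, 2, 4, 8} : Set ℕ))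
    (A : Fin (m + 1) → Matrix (Fin (2 * m)) (Fin (2 * m)) ℝ)
    (hsymm : ∀ α, (A α).IsSymm)
    (hsq : ∀ α, (A α) ^ 2 = (1 / 3 : ℝ) • (1 : Matrix (Fin (2 * m)) (Fin (2 * m)) ℝ))
    (hanti : ∀ α β, α ≠ β → A α * A β + A β * A α = 0) :
    (∑ α, ∑ β, (- Matrix.trace ((A α * A β - A β * A α) ^ 2))
        = 8 * (m : ℝ) ^ 2 * ((m : ℝ) + 1) / 9)
    ∧ Real.sqrt (∑ α, ∑ β, (- Matrix.trace ((A α * A β - A β * A α) ^ 2)))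
        = (2 / 3) * (m : ℝ) * Real.sqrt (2 * ((m : ℝ) + 1))
    ∧ 0 < Real.sqrt (∑ α, ∑ β, (- Matrix.trace ((A α * A β - A β * A α) ^ 2))) := by
  have hm0 : 0 < m := by
    rcases hm with h | h | h | h <;> simp_all
  have key : ∀ α β, - Matrix.trace ((A α * A β - A β * A α) ^ 2)
      = if α = β then 0 else 8 * (m : ℝ) / 9 := by
    intro α β
    by_cases h : α = β
    · simp [h]
    · simp only [if_neg h]
      have hYX : A β * A α = -(A α * A β) :=
        eq_neg_of_add_eq_zero_right (hanti α β h)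
      have h1 : (A α * A β) * (A α * A β) = -(A α ^ 2 * A β ^ 2) := by
        calc (A α * A β) * (A α * A β) = A α * (A β * A α) * A β := by noncomm_ring
        _ = A α * (-(A α * A β)) * A β := by rw [hYX]
        _ = -(A α ^ 2 * A β ^ 2) := by noncomm_ring
      have h2 : (A α * A β - A β * A α) ^ 2
          = (-4/9 : ℝ) • (1 : Matrix (Fin (2 * m)) (Fin (2 * m)) ℝ) := by
        rw [sq, hYX, sub_neg_eq_add]
        have hx : (A α * A β + A α * A β) * (A α * A β + A α * A β)
            = (A α * A β) * (A α * A β) + (A α * A β) * (A α * A β)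
              + ((A α * A β) * (A α * A β) + (A α * A β) * (A α * A β)) := by
          noncomm_ring
        rw [hx, h1, hsq α, hsq β]
        simp [smul_smul]
        module
      rw [h2, Matrix.trace_smul, Matrix.trace_one]
      simp
      ring
  simp only [key]
  have hrow : ∀ α : Fin (m + 1),
      ∑ β, (if α = β then (0:ℝ) else 8 * (m : ℝ) / 9) = m * (8 * (m : ℝ) / 9) := by
    intro α
    have split : ∀ β : Fin (m + 1), (if α = β then (0:ℝ) else 8 * (m : ℝ) / 9)
        = 8 * (m : ℝ) / 9 - (if α = β then 8 * (m : ℝ) / 9 else 0) := by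
      intro β; by_cases h : α = β <;> simp [h]
    rw [Finset.sum_congr rfl (fun β _ => split β), Finset.sum_sub_distrib,
      Finset.sum_ite_eq, Finset.sum_const]
    simp [Finset.card_univ]
    ring
  rw [Finset.sum_congr rfl (fun α _ => hrow α), Finset.sum_const]
  simp only [Finset.card_univ, Fintype.card_fin]
  have eq1 : ((m + 1) : ℕ) • ((m : ℝ) * (8 * (m : ℝ) / 9))
      = 8 * (m : ℝ) ^ 2 * ((m : ℝ) + 1) / 9 := by
    push_cast
    ring
  rw [eq1]
  have hmpos : (0 : ℝ) < m := by exact_mod_cast hm0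
  refine ⟨rfl, ?_, ?_⟩
  · have h8 : 8 * (m : ℝ) ^ 2 * ((m : ℝ) + 1) / 9
        = ((2/3) * (m : ℝ)) ^ 2 * (2 * ((m : ℝ) + 1)) := by ring
    rw [h8, Real.sqrt_mul (by positivity), Real.sqrt_sq (by positivity)]
  · rw [Real.sqrt_pos]
    positivity
end

section
/- Let A and B be n×n real matrices satisfying the Ozeki–Takeuchi relation A = B²A + AB² + BAB, and suppose A³ = A and B³ = B. Then tr(AB) = 0. -/
theorem stmt_5 {n : ℕ} (A B : Matrix (Fin n) (Fin n) ℝ)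
    (hOT : A = B ^ 2 * A + A * B ^ 2 + B * A * B)
    (hA3 : A ^ 3 = A) (hB3 : B ^ 3 = B) :
    Matrix.trace (A * B) = 0 := by
  have h : A * B = (B ^ 2 * A + A * B ^ 2 + B * A * B) * B := by
    conv_lhs => rw [hOT]
  have ht : Matrix.trace (A * B) =
      Matrix.trace (B ^ 2 * A * B) + Matrix.trace (A * B ^ 2 * B) +
      Matrix.trace (B * A * B * B) := by
    rw [h]; simp [Matrix.add_mul, Matrix.trace_add]
  have e1 : Matrix.trace (B ^ 2 * A * B) = Matrix.trace (A * B) := by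
    rw [mul_assoc, Matrix.trace_mul_comm (B ^ 2) (A * B)]
    congr 1
    rw [show A * B * B ^ 2 = A * B ^ 3 by noncomm_ring, hB3]
  have e2 : Matrix.trace (A * B ^ 2 * B) = Matrix.trace (A * B) := by
    congr 1
    rw [show A * B ^ 2 * B = A * B ^ 3 by noncomm_ring, hB3]
  have e3 : Matrix.trace (B * A * B * B) = Matrix.trace (A * B) := by
    rw [show B * A * B * B = B * (A * (B * B)) by noncomm_ring,
        Matrix.trace_mul_comm B (A * (B * B))]
    congr 1
    rw [show A * (B * B) * B = A * B ^ 3 by noncomm_ring, hB3]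
  rw [e1, e2, e3] at ht
  linarith
end

section
/- Let A₁,…,A_p be symmetric n×n real matrices with Aα³ = Aα for all α, and Aα = Aβ²Aα + AαAβ² + AβAαAβ for all α ≠ β. Suppose tr(Aα²) = t for all α. Then Σ_{α,β=1}^p ‖[Aα,Aβ]‖² = 6·tr((Σ_α Aα²)²) - 2(p+2)·p·t. -/
/-! Multiplying the Ozeki–Takeuchi relation for `α ≠ β` on the right by `A α` and taking traces gives
`tr(Aα²) = 2 tr(Aα²Aβ²) + tr((AαAβ)²)`, while `Aα³ = Aα` gives `3 tr(Aα²)` for the same expression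
when `α = β`. Summing over all pairs yields `(p+2)·p·t`, and since
`‖[Aα,Aβ]‖² = 6 tr(Aα²Aβ²) - 2 (2 tr(Aα²Aβ²) + tr((AαAβ)²))`, the sum of the commutator norms is
`6 tr((Σ Aα²)²) - 2(p+2)·p·t`. -/

open Matrix Finset

section
variable {m R : Type*} [Fintype m] [DecidableEq m] [CommRing R]

theorem trace_mul_mul_mul_mul_eq (A B : Matrix m m R) :
    trace (B * A * B * A) = trace ((A * B) ^ 2) := by
  rw [trace_mul_comm, sq]
  congr 1
  noncomm_ring

theorem trace_mul_sq_mul_eq (A B : Matrix m m R) :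
    trace (A * B ^ 2 * A) = trace (A ^ 2 * B ^ 2) := by
  rw [trace_mul_comm, ← mul_assoc, ← sq]

theorem neg_trace_commutator_sq (A B : Matrix m m R) :
    -trace ((A * B - B * A) ^ 2) = 2 * trace (A ^ 2 * B ^ 2) - 2 * trace ((A * B) ^ 2) := by
  have hXY : trace (A * B * (B * A)) = trace (A ^ 2 * B ^ 2) := by
    rw [← trace_mul_sq_mul_eq, sq B, ← mul_assoc, mul_assoc A B B]
  have hYX : trace (B * A * (A * B)) = trace (A ^ 2 * B ^ 2) := by rw [trace_mul_comm, hXY]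
  have hYY : trace (B * A * (B * A)) = trace ((A * B) ^ 2) := by
    rw [← mul_assoc, trace_mul_mul_mul_mul_eq]
  rw [sq (A * B - B * A), sub_mul, mul_sub, mul_sub, trace_sub, trace_sub, trace_sub, hXY, hYX, hYY,
    ← sq]
  ring

theorem trace_sq_eq_of_ozekiTakeuchi {A B : Matrix m m R}
    (h : A = B ^ 2 * A + A * B ^ 2 + B * A * B) :
    trace (A ^ 2) = 2 * trace (A ^ 2 * B ^ 2) + trace ((A * B) ^ 2) := by
  have e := congrArg (fun X => trace (X * A)) h
  simp only [add_mul, trace_add] at e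
  rw [← sq, mul_assoc, ← sq, trace_mul_comm, trace_mul_sq_mul_eq, trace_mul_mul_mul_mul_eq] at e
  rw [e]
  ring

theorem trace_sq_eq_of_pow_three {A : Matrix m m R} (h : A ^ 3 = A) :
    3 * trace (A ^ 2) = 2 * trace (A ^ 2 * A ^ 2) + trace ((A * A) ^ 2) := by
  have h4 : A ^ 4 = A ^ 2 := by rw [pow_succ, h, ← sq]
  rw [← pow_add, ← sq, ← pow_mul, h4]
  ring

variable {ι : Type*} [Fintype ι] [DecidableEq ι]

theorem sum_sum_trace_of_ozekiTakeuchi (A : ι → Matrix m m R) (hcube : ∀ α, A α ^ 3 = A α)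
    (hOT : ∀ α β, α ≠ β → A α = A β ^ 2 * A α + A α * A β ^ 2 + A β * A α * A β) :
    ∑ α, ∑ β, (2 * trace (A α ^ 2 * A β ^ 2) + trace ((A α * A β) ^ 2))
      = ((Fintype.card ι : R) + 2) * ∑ α, trace (A α ^ 2) := by
  have hpair : ∀ α β, 2 * trace (A α ^ 2 * A β ^ 2) + trace ((A α * A β) ^ 2)
      = trace (A α ^ 2) + if α = β then 2 * trace (A α ^ 2) else 0 := by
    intro α β
    by_cases hαβ : α = β
    · subst hαβ
      rw [if_pos rfl, ← trace_sq_eq_of_pow_three (hcube α)]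
      ring
    · rw [if_neg hαβ, ← trace_sq_eq_of_ozekiTakeuchi (hOT α β hαβ), add_zero]
  simp only [hpair, sum_add_distrib, sum_ite_eq, mem_univ, if_true, sum_const, card_univ,
    nsmul_eq_mul, add_mul, mul_sum]

omit [DecidableEq ι] in
theorem trace_sum_sq_sq (A : ι → Matrix m m R) :
    trace ((∑ α, A α ^ 2) ^ 2) = ∑ α, ∑ β, trace (A α ^ 2 * A β ^ 2) := by
  simp only [sq (∑ α, A α ^ 2), sum_mul_sum, trace_sum]

end

theorem stmt_7_general {n p : ℕ} (A : Fin p → Matrix (Fin n) (Fin n) ℝ) (t : ℝ)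
    (hcube : ∀ α, (A α) ^ 3 = A α)
    (hOT : ∀ α β, α ≠ β → A α = (A β) ^ 2 * A α + A α * (A β) ^ 2 + A β * A α * A β)
    (htr : ∀ α, Matrix.trace ((A α) ^ 2) = t) :
    ∑ α, ∑ β, (- Matrix.trace ((A α * A β - A β * A α) ^ 2))
      = 6 * Matrix.trace ((∑ α, (A α) ^ 2) ^ 2) - 2 * (p + 2) * p * t := by
  calc ∑ α, ∑ β, (- trace ((A α * A β - A β * A α) ^ 2))
      = 6 * ∑ α, ∑ β, trace (A α ^ 2 * A β ^ 2)
          - 2 * ∑ α, ∑ β, (2 * trace (A α ^ 2 * A β ^ 2) + trace ((A α * A β) ^ 2)) := by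
        simp only [neg_trace_commutator_sq, mul_sum, ← sum_sub_distrib]
        congr! 2
        ring
    _ = 6 * trace ((∑ α, A α ^ 2) ^ 2) - 2 * (p + 2) * p * t := by
        rw [trace_sum_sq_sq, sum_sum_trace_of_ozekiTakeuchi A hcube hOT]
        simp only [htr, sum_const, card_univ, Fintype.card_fin, nsmul_eq_mul]
        ring

theorem stmt_7 {n p : ℕ} (A : Fin p → Matrix (Fin n) (Fin n) ℝ) (t : ℝ)
    (hsymm : ∀ α, (A α).IsSymm)
    (hcube : ∀ α, (A α) ^ 3 = A α)
    (hOT : ∀ α β, α ≠ β → A α = (A β) ^ 2 * A α + A α * (A β) ^ 2 + A β * A α * A β)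
    (htr : ∀ α, Matrix.trace ((A α) ^ 2) = t) :
    ∑ α, ∑ β, (- Matrix.trace ((A α * A β - A β * A α) ^ 2))
      = 6 * Matrix.trace ((∑ α, (A α) ^ 2) ^ 2) - 2 * (p + 2) * p * t :=
  stmt_7_general A t hcube hOT htr
end

section
/- Let m₁, m₂ be positive integers and let A₁,…,A_{m₁+1} be symmetric n×n matrices (n = m₁+2m₂) satisfying the shape-operator identities of the focal submanifold M₊ with g=4: Aα³ = Aα, tr(Aα²) = 2m₂, Aα = Aβ²Aα + AαAβ² + AβAαAβ for α≠β. If moreover Σ_α Aα² has trace 2m₂(m₁+1), then 6·tr((Σ_α Aα²)²) - 6m₂(m₁+1)(m₁+2) ≥ (6m₁m₂(m₁+1)/(m₁+2m₂))·(2m₂ - m₁ - 2). -/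
/-- Cauchy–Schwarz for the trace of the square of a symmetric real matrix:
`(tr S)^2 ≤ n * tr (S^2)`. -/
lemma trace_sq_le {n : ℕ} (S : Matrix (Fin n) (Fin n) ℝ) (hS : S.IsSymm) :
    (Matrix.trace S) ^ 2 ≤ (n : ℝ) * Matrix.trace (S ^ 2) := by
  have h1 : Matrix.trace (S ^ 2) = ∑ i, ∑ j, (S i j) ^ 2 := by
    rw [sq, Matrix.trace]
    simp only [Matrix.diag, Matrix.mul_apply]
    refine Finset.sum_congr rfl fun i _ => Finset.sum_congr rfl fun j _ => ?_
    rw [hS.apply j i, sq]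
  have h2 : (∑ i, S i i) ^ 2 ≤ (n : ℝ) * ∑ i, (S i i) ^ 2 := by
    have := sq_sum_le_card_mul_sum_sq (s := (Finset.univ : Finset (Fin n)))
      (f := fun i => S i i)
    simpa using this
  have h3 : ∑ i, (S i i) ^ 2 ≤ ∑ i, ∑ j, (S i j) ^ 2 := by
    refine Finset.sum_le_sum fun i _ => ?_
    have : (S i i) ^ 2 ≤ ∑ j ∈ Finset.univ, (S i j) ^ 2 :=
      Finset.single_le_sum (f := fun j => (S i j) ^ 2)
        (fun j _ => sq_nonneg _) (Finset.mem_univ i)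
    exact this
  have hn : (0 : ℝ) ≤ (n : ℝ) := Nat.cast_nonneg n
  calc (Matrix.trace S) ^ 2 = (∑ i, S i i) ^ 2 := rfl
    _ ≤ (n : ℝ) * ∑ i, (S i i) ^ 2 := h2
    _ ≤ (n : ℝ) * ∑ i, ∑ j, (S i j) ^ 2 := by nlinarith
    _ = (n : ℝ) * Matrix.trace (S ^ 2) := by rw [h1]

theorem stmt_9 {m₁ m₂ : ℕ} (hm₁ : 0 < m₁) (hm₂ : 0 < m₂)
    (A : Fin (m₁ + 1) → Matrix (Fin (m₁ + 2 * m₂)) (Fin (m₁ + 2 * m₂)) ℝ)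
    (hsymm : ∀ α, (A α).IsSymm)
    (hcube : ∀ α, (A α) ^ 3 = A α)
    (htr : ∀ α, Matrix.trace ((A α) ^ 2) = 2 * (m₂ : ℝ))
    (hOT : ∀ α β, α ≠ β → A α = (A β) ^ 2 * A α + A α * (A β) ^ 2 + A β * A α * A β)
    (hsum : Matrix.trace (∑ α, (A α) ^ 2) = 2 * (m₂ : ℝ) * ((m₁ : ℝ) + 1)) :
    6 * Matrix.trace ((∑ α, (A α) ^ 2) ^ 2) - 6 * (m₂ : ℝ) * ((m₁ : ℝ) + 1) * ((m₁ : ℝ) + 2)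
      ≥ (6 * (m₁ : ℝ) * (m₂ : ℝ) * ((m₁ : ℝ) + 1) / ((m₁ : ℝ) + 2 * (m₂ : ℝ)))
          * (2 * (m₂ : ℝ) - (m₁ : ℝ) - 2) := by
  set S := ∑ α, (A α) ^ 2 with hSdef
  have hS : S.IsSymm := by
    rw [Matrix.IsSymm, Matrix.transpose_sum]
    exact Finset.sum_congr rfl fun α _ => ((hsymm α).pow 2).eq
  have key := trace_sq_le S hS
  rw [hsum] at key
  have hn : (0 : ℝ) < (m₁ : ℝ) + 2 * (m₂ : ℝ) := by positivity
  have hncast : ((m₁ + 2 * m₂ : ℕ) : ℝ) = (m₁ : ℝ) + 2 * (m₂ : ℝ) := by push_cast; ring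
  rw [hncast] at key
  rw [ge_iff_le, div_mul_eq_mul_div, div_le_iff₀ hn]
  nlinarith [key, sq_nonneg ((m₁:ℝ) - 2*m₂), (by exact_mod_cast hm₁ : (1:ℝ) ≤ m₁), (by exact_mod_cast hm₂ : (1:ℝ) ≤ m₂)]
end

section
/- Let A₁,…,A_p be symmetric n×n matrices with Aα³ = Aα for all α and Aα = Aβ²Aα + AαAβ² + AβAαAβ for all α ≠ β, and set ‖B‖² := Σ_α tr(Aα²). Then (p+2)·‖B‖² = 2·Σ_{α,β=1}^p tr(Aα²Aβ²) + Σ_{α,β=1}^p tr((AαAβ)²). -/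
theorem stmt_19 {n p : ℕ} (A : Fin p → Matrix (Fin n) (Fin n) ℝ)
    (hsymm : ∀ α, (A α).IsSymm)
    (hcube : ∀ α, (A α) ^ 3 = A α)
    (hOT : ∀ α β, α ≠ β → A α = (A β) ^ 2 * A α + A α * (A β) ^ 2 + A β * A α * A β) :
    ((p : ℝ) + 2) * (∑ α, Matrix.trace ((A α) ^ 2))
      = 2 * ∑ α, ∑ β, Matrix.trace ((A α) ^ 2 * (A β) ^ 2)
        + ∑ α, ∑ β, Matrix.trace ((A α * A β) ^ 2) := by
  have key : ∀ α β, 2 * Matrix.trace ((A α) ^ 2 * (A β) ^ 2)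
      + Matrix.trace ((A α * A β) ^ 2)
      = (1 + if α = β then 2 else 0) * Matrix.trace ((A α) ^ 2) := by
    intro α β
    by_cases h : α = β
    · subst h
      simp only [if_pos rfl]
      have h4 : (A α) ^ 2 * (A α) ^ 2 = (A α) ^ 2 := by
        have : (A α) ^ 2 * (A α) ^ 2 = (A α) ^ 3 * A α := by noncomm_ring
        rw [this, hcube, ← pow_two]
      have h4' : (A α * A α) ^ 2 = (A α) ^ 2 := by
        have : (A α * A α) ^ 2 = (A α) ^ 2 * (A α) ^ 2 := by noncomm_ring
        rw [this, h4]
      rw [h4, h4']; simp; ring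
    · simp only [if_neg h]
      have e : (A α) ^ 2 = (A β) ^ 2 * (A α) ^ 2 + (A α * (A β) ^ 2) * A α
          + (A β * A α * A β) * A α := by
        calc (A α) ^ 2 = A α * A α := sq (A α)
        _ = ((A β) ^ 2 * A α + A α * (A β) ^ 2 + A β * A α * A β) * A α := by
            rw [← hOT α β h]
        _ = _ := by noncomm_ring
      have := congrArg Matrix.trace e
      rw [Matrix.trace_add, Matrix.trace_add,
        Matrix.trace_mul_comm ((A β) ^ 2) ((A α) ^ 2),
        Matrix.trace_mul_comm (A α * (A β) ^ 2) (A α),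
        Matrix.trace_mul_comm (A β * A α * A β) (A α)] at this
      have e1 : A α * (A α * (A β) ^ 2) = (A α) ^ 2 * (A β) ^ 2 := by noncomm_ring
      have e2 : A α * (A β * A α * A β) = (A α * A β) ^ 2 := by noncomm_ring
      rw [e1, e2] at this
      rw [this]; ring
  have hsum : ∀ α : Fin p, ∑ β, (2 * Matrix.trace ((A α) ^ 2 * (A β) ^ 2)
      + Matrix.trace ((A α * A β) ^ 2)) = ((p : ℝ) + 2) * Matrix.trace ((A α) ^ 2) := by
    intro α
    simp only [key, add_mul, one_mul, ite_mul, zero_mul, Finset.sum_add_distrib,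
      Finset.sum_ite_eq, Finset.mem_univ, if_pos, Finset.sum_const, Finset.card_univ,
      Fintype.card_fin, nsmul_eq_mul]
  rw [Finset.mul_sum, Finset.mul_sum, ← Finset.sum_add_distrib]
  refine Finset.sum_congr rfl fun α _ => ?_
  rw [← hsum α, Finset.sum_add_distrib, Finset.mul_sum]
end
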